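/- For every n ≥ 1, χ(1, 2, …, n) = n + 2; that is, for S = {±1, ±2, …, ±n}, there exists a Borel proper (n+2)-coloring of the Schreier graph G_S on F(2^ℤ) but no Borel proper (n+1)-coloring. -/

import Mathlib

/-- The shift action of `ℤ` on `α^ℤ`: `(s · x)(n) = x(n + s)`. -/
def shift {α : Type*} (s : ℤ) (x : ℤ → α) : ℤ → α := fun n => x (n + s)

/-- The free part `F(2^ℤ)` of the shift action on `2^ℤ = (ℤ → Bool)`. -/
def FreePart : Set (ℤ → Bool) := {x | ∀ s : ℤ, s ≠ 0 → shift s x ≠ x}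

/-- `c` is a Borel proper coloring of the Schreier graph `G_S` on `F(2^ℤ)`,
where `S = {±a : a ∈ A}`: `c` is Borel and `c(x) ≠ c(s · x)` for all `x` and `s ∈ S`. -/
def IsBorelColoring (A : Finset ℕ) {k : ℕ}
    (c : {x : ℤ → Bool // x ∈ FreePart} → Fin k) : Prop :=
  Measurable c ∧
    ∀ (x : {x : ℤ → Bool // x ∈ FreePart}) (a : ℕ), a ∈ A →
      ∀ (h : shift (a : ℤ) x.1 ∈ FreePart), c x ≠ c ⟨shift (a : ℤ) x.1, h⟩

/-- The Borel chromatic number `χ(a₁, …, aₙ)` of the Schreier graph `G_S` on `F(2^ℤ)`,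
where `S = {±a : a ∈ A}`: the least `k` admitting a Borel proper `k`-coloring. -/
noncomputable def borelChromatic (A : Finset ℕ) : ℕ :=
  sInf {k : ℕ | ∃ c : {x : ℤ → Bool // x ∈ FreePart} → Fin k, IsBorelColoring A c}


/-!
Lower bound. In an `(n + 1)`-colouring the points `x, x + 1, …, x + n` are pairwise adjacent, so
`x + n + 1` gets the colour of `x`: every colour class is invariant under the shift by `n + 1`.
That shift is topologically transitive on `2^ℤ`, so by generic ergodicity each Borel colour class
is meagre or comeagre. The free part is comeagre, so some class is comeagre, and then so is its
translate by `1`; but a class and its translate by `1` are disjoint.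

Upper bound. A Borel maximal independent set of the graph "distance at most `n (n + 2)`", built
greedily from a countable cover by open independent sets, cuts every orbit into gaps of length
`L ≥ (n + 1) ^ 2`. Such a gap is tiled by `L % (n + 1)` blocks of length `n + 2` followed by at
least one block of length `n + 1`. Colour each point by its offset in its block: two points at
distance at most `n` lie in one block or in consecutive blocks, and in both cases the offsets
differ.
-/

open Set Filter Topology

section Shift

variable {α : Type*}

theorem shift_add (a b : ℤ) (x : ℤ → α) : shift (a + b) x = shift a (shift b x) := by
  funext m
  simp only [shift, add_assoc]

theorem shift_zero (x : ℤ → α) : shift 0 x = x := by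
  funext m
  simp [shift]

theorem shift_neg_shift (s : ℤ) (x : ℤ → α) : shift (-s) (shift s x) = x := by
  rw [← shift_add, neg_add_cancel, shift_zero]

theorem shift_shift_neg (s : ℤ) (x : ℤ → α) : shift s (shift (-s) x) = x := by
  rw [← shift_add, add_neg_cancel, shift_zero]

theorem shift_injective (s : ℤ) : Function.Injective (shift s : (ℤ → α) → ℤ → α) :=
  Function.LeftInverse.injective (g := shift (-s)) (shift_neg_shift s)

theorem shift_comm (a b : ℤ) (x : ℤ → α) : shift a (shift b x) = shift b (shift a x) := by
  rw [← shift_add, ← shift_add, add_comm]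

variable [TopologicalSpace α]

theorem continuous_shift (s : ℤ) : Continuous (shift s : (ℤ → α) → ℤ → α) :=
  continuous_pi fun m => continuous_apply (m + s)

theorem isOpenMap_shift (s : ℤ) : IsOpenMap (shift s : (ℤ → α) → ℤ → α) :=
  .of_inverse (continuous_shift (-s)) (shift_shift_neg s) (shift_neg_shift s)

theorem isClosed_setOf_shift_eq [T2Space α] (s : ℤ) : IsClosed {x : ℤ → α | shift s x = x} :=
  isClosed_eq (continuous_shift s) continuous_id

theorem exists_shift_preimage_inter_nonempty {p : ℤ} (hp : p ≠ 0) {U V : Set (ℤ → α)}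
    (hU : IsOpen U) (hV : IsOpen V) (hUne : U.Nonempty) (hVne : V.Nonempty) :
    ∃ m : ℕ, (shift (m * p) ⁻¹' U ∩ V).Nonempty := by
  classical
  obtain ⟨x, hx⟩ := hUne
  obtain ⟨y, hy⟩ := hVne
  obtain ⟨I, u, hu, hIU⟩ := isOpen_pi_iff.1 hU x hx
  obtain ⟨J, v, hv, hJV⟩ := isOpen_pi_iff.1 hV y hy
  have hinj : Function.Injective fun m : ℕ => (m : ℤ) * p := fun a b h => by
    simpa using mul_right_cancel₀ hp h
  obtain ⟨_, ⟨m, rfl⟩, hm⟩ :=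
    (Set.infinite_range_of_injective hinj).exists_notMem_finset (Finset.image₂ (· - ·) J I)
  refine ⟨m, fun j => if j - m * p ∈ I then x (j - m * p) else y j, ?_, ?_⟩
  · refine hIU fun i hi => ?_
    simpa [shift, Finset.mem_coe.1 hi] using (hu i hi).2
  · refine hJV fun j hj => ?_
    have hjI : j - m * p ∉ I := fun h => hm (Finset.mem_image₂.2 ⟨j, hj, _, h, by ring⟩)
    simpa [hjI] using (hv j hj).2

end Shift

/-- Generic ergodicity for a topologically transitive family of maps. -/
theorem isMeagre_or_isMeagre_compl_of_preimage_eq {X ι : Type*} [TopologicalSpace X]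
    [BaireSpace X] {f : ι → X → X} (hcont : ∀ i, Continuous (f i)) (hopen : ∀ i, IsOpenMap (f i))
    (htrans : ∀ U V : Set X, IsOpen U → IsOpen V → U.Nonempty → V.Nonempty →
      ∃ i, (f i ⁻¹' U ∩ V).Nonempty)
    {A : Set X} (hA : BaireMeasurableSet A) (hinv : ∀ i, f i ⁻¹' A = A) :
    IsMeagre A ∨ IsMeagre Aᶜ := by
  by_contra! hA'
  obtain ⟨U, hU, hAU⟩ := hA.residualEq_isOpen
  obtain ⟨V, hV, hAV⟩ := hA.compl.residualEq_isOpen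
  have hUne : U.Nonempty :=
    nonempty_iff_ne_empty.2 fun h => hA'.1 (eventuallyEq_empty.1 (h ▸ hAU))
  have hVne : V.Nonempty :=
    nonempty_iff_ne_empty.2 fun h => hA'.2 (eventuallyEq_empty.1 (h ▸ hAV))
  obtain ⟨i, hW⟩ := htrans U V hU hV hUne hVne
  refine not_isMeagre_of_isOpen ((hU.preimage (hcont i)).inter hV) hW ?_
  have hAU' := (tendsto_residual_of_isOpenMap (hcont i) (hopen i)).eventually
    (eventuallyEq_set.1 hAU)
  filter_upwards [hAU', eventuallyEq_set.1 hAV] with x hxU hxV ⟨hfx, hx⟩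
  have hxA : x ∈ A := by rw [← hinv i]; exact hxU.2 hfx
  exact hxV.2 hx hxA

theorem isMeagre_or_isMeagre_compl_of_shift_preimage_eq {α : Type*} [TopologicalSpace α]
    [BaireSpace (ℤ → α)] {p : ℤ} (hp : p ≠ 0) {A : Set (ℤ → α)} (hA : BaireMeasurableSet A)
    (hinv : ∀ m : ℕ, shift (m * p) ⁻¹' A = A) : IsMeagre A ∨ IsMeagre Aᶜ :=
  isMeagre_or_isMeagre_compl_of_preimage_eq (fun _ => continuous_shift _)
    (fun _ => isOpenMap_shift _) (fun _ _ hU hV => exists_shift_preimage_inter_nonempty hp hU hV)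
    hA hinv

theorem isMeagre_setOf_shift_eq {s : ℤ} (hs : s ≠ 0) :
    IsMeagre {x : ℤ → Bool | shift s x = x} := by
  have hinv (m : ℕ) : shift ((m : ℤ) * 1) ⁻¹' {x : ℤ → Bool | shift s x = x} =
      {x | shift s x = x} := by
    ext x
    change shift s (shift _ x) = shift _ x ↔ shift s x = x
    rw [shift_comm, (shift_injective _).eq_iff]
  refine (isMeagre_or_isMeagre_compl_of_shift_preimage_eq one_ne_zero
    (isClosed_setOf_shift_eq s).measurableSet.baireMeasurableSet hinv).resolve_right fun h => ?_
  -- a comeagre closed set is everything, but the indicator of `{0}` is not periodic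
  have huniv : {x : ℤ → Bool | shift s x = x} = univ := by
    rw [← (isClosed_setOf_shift_eq s).closure_eq]
    exact (dense_of_mem_residual (by rwa [IsMeagre, compl_compl] at h)).closure_eq
  have hmem : (fun i : ℤ => decide (i = 0)) ∈ {x : ℤ → Bool | shift s x = x} :=
    huniv ▸ mem_univ _
  simpa [shift, hs] using congrFun hmem 0

theorem shift_mem_freePart_iff {s : ℤ} {x : ℤ → Bool} :
    shift s x ∈ FreePart ↔ x ∈ FreePart := by
  refine forall_congr' fun t => imp_congr_right fun _ => not_congr ?_
  rw [shift_comm, (shift_injective s).eq_iff]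

theorem compl_freePart : FreePartᶜ = ⋃ (s : ℤ) (_ : s ≠ 0), {x | shift s x = x} := by
  ext x
  simp [FreePart]

theorem freePart_mem_residual : FreePart ∈ residual (ℤ → Bool) := by
  rw [← compl_compl FreePart, compl_freePart]
  exact isMeagre_iUnion fun s => isMeagre_iUnion fun hs => isMeagre_setOf_shift_eq hs

theorem measurableSet_freePart : MeasurableSet FreePart := by
  refine .of_compl ?_
  rw [compl_freePart]
  exact .iUnion fun s => .iUnion fun _ => (isClosed_setOf_shift_eq s).measurableSet

instance : AddAction ℤ FreePart where
  vadd k x := ⟨shift k x, shift_mem_freePart_iff.2 x.2⟩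
  zero_vadd x := Subtype.ext (shift_zero x.1)
  add_vadd a b x := Subtype.ext (shift_add a b x.1)

namespace FreePart

theorem continuous_const_vadd (k : ℤ) : Continuous (k +ᵥ · : FreePart → FreePart) :=
  ((continuous_shift k).comp continuous_subtype_val).subtype_mk _

theorem measurable_const_vadd (k : ℤ) : Measurable (k +ᵥ · : FreePart → FreePart) :=
  (continuous_const_vadd k).measurable

theorem shift_preimage_image_val {β : Type*} {f : FreePart → β} {k : ℤ}
    (hf : ∀ x, f (k +ᵥ x) = f x) (t : Set β) :
    shift k ⁻¹' (Subtype.val '' (f ⁻¹' t)) = Subtype.val '' (f ⁻¹' t) := by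
  ext x
  constructor
  · rintro ⟨y, hy, hyx⟩
    have hx : x ∈ FreePart := shift_mem_freePart_iff.1 (hyx ▸ y.2)
    have hxy : k +ᵥ (⟨x, hx⟩ : FreePart) = y := Subtype.ext hyx.symm
    exact ⟨⟨x, hx⟩, by rwa [mem_preimage, ← hf, hxy], rfl⟩
  · rintro ⟨y, hy, rfl⟩
    exact ⟨k +ᵥ y, by rwa [mem_preimage, hf], rfl⟩

end FreePart

theorem IsBorelColoring.ne_vadd {A : Finset ℕ} {k : ℕ} {c : FreePart → Fin k}
    (hc : IsBorelColoring A c) (x : FreePart) {a : ℕ} (ha : a ∈ A) : c x ≠ c ((a : ℤ) +ᵥ x) :=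
  hc.2 x a ha _

theorem IsBorelColoring.castLE {A : Finset ℕ} {k m : ℕ} {c : FreePart → Fin k}
    (hc : IsBorelColoring A c) (hkm : k ≤ m) : IsBorelColoring A (Fin.castLE hkm ∘ c) :=
  ⟨(measurable_of_countable _).comp hc.1, fun x a ha h he =>
    hc.2 x a ha h (Fin.castLE_injective hkm he)⟩

/-- `n + 1` consecutive values of `g` exhaust its `n + 1` colours, so `g i` and `g (i + n + 1)`
are both the one colour missing from `g (i + 1), …, g (i + n)`. -/
theorem Function.periodic_of_ne_of_sub_le {n : ℕ} {g : ℤ → Fin (n + 1)}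
    (hg : ∀ i j : ℤ, i < j → j - i ≤ n → g i ≠ g j) : Function.Periodic g (n + 1) := by
  classical
  intro i
  set T := (Finset.Icc 1 n).image fun s : ℕ => g (i + s)
  have hT : T.card = n := by
    rw [Finset.card_image_of_injOn, Nat.card_Icc, Nat.add_sub_cancel]
    intro s hs t ht hst
    simp only [Finset.coe_Icc, mem_Icc] at hs ht
    by_contra hne
    rcases Nat.lt_or_gt_of_ne hne with h | h
    · exact hg (i + s) (i + t) (by omega) (by omega) hst
    · exact hg (i + t) (i + s) (by omega) (by omega) hst.symm
  have hnot (j : ℤ) (hj : j = i ∨ j = i + (n + 1)) : g j ∉ T := by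
    intro hmem
    obtain ⟨s, hs, hsj⟩ := Finset.mem_image.1 hmem
    rw [Finset.mem_Icc] at hs
    rcases hj with rfl | rfl
    · exact hg j (j + s) (by omega) (by omega) hsj.symm
    · exact hg (i + s) (i + (n + 1)) (by omega) (by omega) hsj
  have hcompl : Tᶜ.card ≤ 1 := by simp [Finset.card_compl, hT]
  exact Finset.card_le_one.1 hcompl _ (Finset.mem_compl.2 (hnot _ (.inr rfl))) _
    (Finset.mem_compl.2 (hnot _ (.inl rfl)))

theorem not_exists_isBorelColoring_Icc {n : ℕ} (hn : 1 ≤ n) :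
    ¬ ∃ c : FreePart → Fin (n + 1), IsBorelColoring (Finset.Icc 1 n) c := by
  rintro ⟨c, hc⟩
  have hper (x : FreePart) : Function.Periodic (fun i : ℤ => c (i +ᵥ x)) (n + 1) := by
    refine Function.periodic_of_ne_of_sub_le fun i j hij hjn => ?_
    have := hc.ne_vadd (i +ᵥ x) (a := (j - i).toNat) (Finset.mem_Icc.2 ⟨by omega, by omega⟩)
    rwa [vadd_vadd, Int.toNat_of_nonneg (by omega), sub_add_cancel] at this
  set A : Fin (n + 1) → Set (ℤ → Bool) := fun i => Subtype.val '' (c ⁻¹' {i})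
  have hinv (i : Fin (n + 1)) (m : ℕ) : shift ((m : ℤ) * (n + 1)) ⁻¹' A i = A i :=
    FreePart.shift_preimage_image_val (fun x => by simpa using (hper x).nat_mul_eq m) _
  obtain ⟨i, hi⟩ : ∃ i, ¬ IsMeagre (A i) := by
    by_contra! h
    have hcover : FreePart ⊆ ⋃ i, A i := fun x hx => mem_iUnion.2 ⟨c ⟨x, hx⟩, ⟨x, hx⟩, rfl, rfl⟩
    exact not_isMeagre_of_mem_residual freePart_mem_residual ((isMeagre_iUnion h).mono hcover)
  have hmeas : MeasurableSet (A i) :=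
    measurableSet_freePart.subtype_image (hc.1 (measurableSet_singleton i))
  have hres : A i ∈ residual _ := by
    simpa only [IsMeagre, compl_compl] using (isMeagre_or_isMeagre_compl_of_shift_preimage_eq
      (by omega) hmeas.baireMeasurableSet (hinv i)).resolve_left hi
  have hres' : shift 1 ⁻¹' A i ∈ residual _ :=
    tendsto_residual_of_isOpenMap (continuous_shift 1) (isOpenMap_shift 1) hres
  obtain ⟨_, ⟨y, hy, rfl⟩, z, hz, hzy⟩ := (dense_of_mem_residual (inter_mem hres hres')).nonempty
  have hyz : ((1 : ℕ) : ℤ) +ᵥ y = z := Subtype.ext hzy.symm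
  exact hc.ne_vadd y (Finset.mem_Icc.2 ⟨le_rfl, hn⟩) (by rw [hyz, hy, hz])

namespace SimpleGraph

variable {X : Type*} (G : SimpleGraph X)

def greedyStage (W : ℕ → Set X) : ℕ → Set X
  | 0 => ∅
  | i + 1 => greedyStage W i ∪ (W i \ {x | ∃ y ∈ greedyStage W i, G.Adj x y})

theorem greedyStage_mono (W : ℕ → Set X) : Monotone (G.greedyStage W) :=
  monotone_nat_of_le_succ fun _ => subset_union_left

theorem isIndepSet_greedyStage {W : ℕ → Set X} (hW : ∀ i, G.IsIndepSet (W i)) (i : ℕ) :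
    G.IsIndepSet (G.greedyStage W i) := by
  induction i with
  | zero => exact pairwise_empty _
  | succ i ih =>
    rintro x (hx | ⟨hxW, hxN⟩) y (hy | ⟨hyW, hyN⟩) hxy hadj
    · exact ih hx hy hxy hadj
    · exact hyN ⟨x, hx, hadj.symm⟩
    · exact hxN ⟨y, hy, hadj⟩
    · exact hW i hxW hyW hxy hadj

theorem measurableSet_greedyStage [MeasurableSpace X]
    (hG : ∀ s, MeasurableSet s → MeasurableSet {x | ∃ y ∈ s, G.Adj x y}) {W : ℕ → Set X}
    (hW : ∀ i, MeasurableSet (W i)) (i : ℕ) : MeasurableSet (G.greedyStage W i) := by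
  induction i with
  | zero => exact .empty
  | succ i ih => exact ih.union ((hW i).diff (hG _ ih))

theorem exists_measurableSet_isIndepSet_forall_mem_or_adj [MeasurableSpace X]
    (hG : ∀ s, MeasurableSet s → MeasurableSet {x | ∃ y ∈ s, G.Adj x y}) {W : ℕ → Set X}
    (hWm : ∀ i, MeasurableSet (W i)) (hWi : ∀ i, G.IsIndepSet (W i)) :
    ∃ M, MeasurableSet M ∧ G.IsIndepSet M ∧ ∀ i, ∀ x ∈ W i, x ∈ M ∨ ∃ y ∈ M, G.Adj x y := by
  refine ⟨⋃ i, G.greedyStage W i, .iUnion (G.measurableSet_greedyStage hG hWm),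
    (pairwise_iUnion (G.greedyStage_mono W).directed_le).2 (G.isIndepSet_greedyStage hWi),
    fun i x hx => ?_⟩
  by_cases h : ∃ y ∈ G.greedyStage W i, G.Adj x y
  · obtain ⟨y, hy, hxy⟩ := h
    exact .inr ⟨y, mem_iUnion_of_mem i hy, hxy⟩
  · exact .inl (mem_iUnion_of_mem (i + 1) (.inr ⟨hx, h⟩))

end SimpleGraph

theorem exists_isOpen_cover_forall_apply_notMem {X ι : Type*} [TopologicalSpace X] [T2Space X]
    [SecondCountableTopology X] [Finite ι] {f : ι → X → X} (hf : ∀ i, Continuous (f i))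
    (hfix : ∀ i x, f i x ≠ x) :
    ∃ W : ℕ → Set X, (∀ j, IsOpen (W j)) ∧ (∀ j, ∀ x ∈ W j, ∀ i, f i x ∉ W j) ∧
      ∀ x, ∃ j, x ∈ W j := by
  obtain ⟨B, hBc, -, hB⟩ := TopologicalSpace.exists_countable_basis X
  obtain ⟨W, hW⟩ : ∃ W : ℕ → Set X, insert ∅ {U ∈ B | ∀ x ∈ U, ∀ i, f i x ∉ U} = range W :=
    ((hBc.mono (sep_subset _ _)).insert ∅).exists_eq_range (insert_nonempty _ _)
  have hWS (j : ℕ) : W j ∈ insert ∅ {U ∈ B | ∀ x ∈ U, ∀ i, f i x ∉ U} :=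
    hW ▸ mem_range_self j
  refine ⟨W, fun j => ?_, fun j => ?_, fun x => ?_⟩
  · rcases hWS j with h | h
    · exact h ▸ isOpen_empty
    · exact hB.isOpen h.1
  · rcases hWS j with h | h
    · simp [h]
    · exact h.2
  · have hsep (i : ι) : ∃ O, IsOpen O ∧ x ∈ O ∧ ∀ y ∈ O, f i y ∉ O := by
      obtain ⟨u, v, hu, hv, hxu, hxv, huv⟩ := t2_separation (hfix i x)
      refine ⟨v ∩ f i ⁻¹' u, hv.inter (hu.preimage (hf i)), ⟨hxv, hxu⟩, fun y hy hfy => ?_⟩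
      exact huv.notMem_of_mem_left hy.2 hfy.1
    choose O hO hxO hOf using hsep
    obtain ⟨U, hUB, hxU, hUO⟩ :=
      hB.exists_subset_of_mem_open (mem_iInter.2 hxO) (isOpen_iInter_of_finite hO)
    have hUS : U ∈ insert ∅ {U ∈ B | ∀ x ∈ U, ∀ i, f i x ∉ U} := .inr ⟨hUB, fun y hy i hfy =>
      hOf i y (mem_iInter.1 (hUO hy) i) (mem_iInter.1 (hUO hfy) i)⟩
    obtain ⟨j, rfl⟩ := hW ▸ hUS
    exact ⟨j, hxU⟩

def shiftGraph (N : ℕ) : SimpleGraph FreePart where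
  Adj x y := ∃ k : ℤ, k ≠ 0 ∧ k.natAbs ≤ N ∧ k +ᵥ x = y
  symm := ⟨fun x y ⟨k, hk, hkN, h⟩ =>
    ⟨-k, neg_ne_zero.2 hk, by rwa [Int.natAbs_neg], by rw [← h, neg_vadd_vadd]⟩⟩
  loopless := ⟨fun x ⟨k, hk, _, h⟩ => x.2 k hk (congrArg Subtype.val h)⟩

theorem shiftGraph_adj {N : ℕ} {x y : FreePart} :
    (shiftGraph N).Adj x y ↔ ∃ k : ℤ, k ≠ 0 ∧ k.natAbs ≤ N ∧ k +ᵥ x = y := Iff.rfl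

theorem exists_markers (N : ℕ) :
    ∃ M : Set FreePart, MeasurableSet M ∧
      (∀ x ∈ M, ∀ k : ℤ, k ≠ 0 → k.natAbs ≤ N → k +ᵥ x ∉ M) ∧
      ∀ x, ∃ k : ℤ, k.natAbs ≤ N ∧ k +ᵥ x ∈ M := by
  set K := (Finset.Icc (-(N : ℤ)) N).erase 0
  have hK {k : ℤ} : k ∈ K ↔ k ≠ 0 ∧ k.natAbs ≤ N := by
    simp only [K, Finset.mem_erase, Finset.mem_Icc]
    omega
  obtain ⟨W, hWo, hWi, hWc⟩ := exists_isOpen_cover_forall_apply_notMem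
    (f := fun k : K => ((k : ℤ) +ᵥ · : FreePart → FreePart))
    (fun k => FreePart.continuous_const_vadd k)
    (fun (k : K) x =>
      ((shiftGraph N).ne_of_adj (shiftGraph_adj.2 ⟨k, (hK.1 k.2).1, (hK.1 k.2).2, rfl⟩)).symm)
  have hG (s : Set FreePart) (hs : MeasurableSet s) :
      MeasurableSet {x | ∃ y ∈ s, (shiftGraph N).Adj x y} := by
    have : {x | ∃ y ∈ s, (shiftGraph N).Adj x y} =
        ⋃ k ∈ K, (k +ᵥ · : FreePart → FreePart) ⁻¹' s := by
      ext x
      simp only [shiftGraph_adj, mem_ofPred_eq, mem_iUnion, mem_preimage, hK, exists_prop]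
      constructor
      · rintro ⟨_, hy, k, hk, hkN, rfl⟩
        exact ⟨k, ⟨hk, hkN⟩, hy⟩
      · rintro ⟨k, ⟨hk, hkN⟩, hy⟩
        exact ⟨_, hy, k, hk, hkN, rfl⟩
    rw [this]
    exact .biUnion K.countable_toSet fun k _ => FreePart.measurable_const_vadd k hs
  obtain ⟨M, hMm, hMi, hMd⟩ := (shiftGraph N).exists_measurableSet_isIndepSet_forall_mem_or_adj
    hG (fun j => (hWo j).measurableSet)
    (fun j x hx y hy _ hxy => by
      obtain ⟨k, hk, hkN, rfl⟩ := shiftGraph_adj.1 hxy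
      exact hWi j x hx ⟨k, hK.2 ⟨hk, hkN⟩⟩ hy)
  refine ⟨M, hMm, fun x hx k hk hkN hkx => ?_, fun x => ?_⟩
  · have hadj : (shiftGraph N).Adj x (k +ᵥ x) := shiftGraph_adj.2 ⟨k, hk, hkN, rfl⟩
    exact hMi hx hkx hadj.ne hadj
  · obtain ⟨j, hj⟩ := hWc x
    rcases hMd j x hj with h | ⟨y, hy, hxy⟩
    · exact ⟨0, Nat.zero_le N, by rwa [zero_vadd]⟩
    · obtain ⟨k, -, hkN, rfl⟩ := shiftGraph_adj.1 hxy
      exact ⟨k, hkN, hy⟩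

section Gaps

variable {P : Set ℤ} {i : ℤ}

noncomputable def prevDist (P : Set ℤ) (i : ℤ) : ℕ := sInf {k : ℕ | i - k ∈ P}

noncomputable def nextDist (P : Set ℤ) (i : ℤ) : ℕ := sInf {k : ℕ | 0 < k ∧ i + k ∈ P}

theorem isGreatest_sub_prevDist (h : ∃ p ∈ P, p ≤ i) :
    IsGreatest (P ∩ Iic i) (i - prevDist P i) := by
  obtain ⟨p, hp, hpi⟩ := h
  have hne : {k : ℕ | i - k ∈ P}.Nonempty :=
    ⟨(i - p).toNat, by rwa [mem_ofPred_eq, Int.toNat_of_nonneg (by omega), sub_sub_cancel]⟩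
  refine ⟨⟨Nat.sInf_mem hne, by simp⟩, fun m ⟨hm, hmi⟩ => ?_⟩
  have hmi : m ≤ i := hmi
  have : prevDist P i ≤ (i - m).toNat :=
    Nat.sInf_le (by rwa [mem_ofPred_eq, Int.toNat_of_nonneg (by omega), sub_sub_cancel])
  omega

theorem isLeast_add_nextDist (h : ∃ q ∈ P, i < q) :
    IsLeast (P ∩ Ioi i) (i + nextDist P i) := by
  obtain ⟨q, hq, hiq⟩ := h
  have hne : {k : ℕ | 0 < k ∧ i + k ∈ P}.Nonempty :=
    ⟨(q - i).toNat, by omega, by rwa [Int.toNat_of_nonneg (by omega), add_sub_cancel]⟩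
  have hmem : 0 < nextDist P i ∧ i + nextDist P i ∈ P := Nat.sInf_mem hne
  refine ⟨⟨hmem.2, by simpa using hmem.1⟩, fun m ⟨hm, hmi⟩ => ?_⟩
  have hmi : i < m := hmi
  have : nextDist P i ≤ (m - i).toNat :=
    Nat.sInf_le ⟨by omega, by rwa [Int.toNat_of_nonneg (by omega), add_sub_cancel]⟩
  omega

theorem prevDist_eq {p : ℤ} (h : IsGreatest (P ∩ Iic i) p) : (prevDist P i : ℤ) = i - p := by
  have := (isGreatest_sub_prevDist ⟨p, h.1⟩).unique h
  omega

theorem nextDist_eq {q : ℤ} (h : IsLeast (P ∩ Ioi i) q) : (nextDist P i : ℤ) = q - i := by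
  have := (isLeast_add_nextDist ⟨q, h.1⟩).unique h
  omega

theorem isGreatest_inter_Iic_of_le_of_lt {p q j : ℤ} (hp : IsGreatest (P ∩ Iic i) p)
    (hq : IsLeast (P ∩ Ioi i) q) (hpj : p ≤ j) (hjq : j < q) : IsGreatest (P ∩ Iic j) p :=
  ⟨⟨hp.1.1, hpj⟩, fun m ⟨hm, hmj⟩ => by
    rcases le_or_gt m i with hmi | hmi
    · exact hp.2 ⟨hm, hmi⟩
    · exact absurd (hq.2 ⟨hm, hmi⟩) (not_le.2 (lt_of_le_of_lt hmj hjq))⟩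

theorem isLeast_inter_Ioi_of_le_of_lt {p q j : ℤ} (hp : IsGreatest (P ∩ Iic i) p)
    (hq : IsLeast (P ∩ Ioi i) q) (hpj : p ≤ j) (hjq : j < q) : IsLeast (P ∩ Ioi j) q :=
  ⟨⟨hq.1.1, hjq⟩, fun m ⟨hm, hjm⟩ => by
    rcases le_or_gt m i with hmi | hmi
    · exact absurd (hp.2 ⟨hm, hmi⟩) (not_le.2 (lt_of_le_of_lt hpj hjm))
    · exact hq.2 ⟨hm, hmi⟩⟩

theorem prevDist_preimage_add (P : Set ℤ) (s i : ℤ) :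
    prevDist ((· + s) ⁻¹' P) i = prevDist P (i + s) := by
  simp only [prevDist, mem_preimage, sub_add_eq_add_sub]

theorem nextDist_preimage_add (P : Set ℤ) (s i : ℤ) :
    nextDist ((· + s) ⁻¹' P) i = nextDist P (i + s) := by
  simp only [nextDist, mem_preimage, add_right_comm]

end Gaps

section BlockColor

variable {n b r s : ℕ}

/-- The colouring of `ℕ` by `b` blocks `0, 1, …, n + 1` followed by blocks `0, 1, …, n`. -/
def blockColor (n b r : ℕ) : ℕ :=
  if r < b * (n + 2) then r % (n + 2) else (r - b * (n + 2)) % (n + 1)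

theorem blockColor_lt : blockColor n b r < n + 2 := by
  unfold blockColor
  split_ifs
  · exact Nat.mod_lt _ (by omega)
  · exact (Nat.mod_lt _ (by omega)).trans (by omega)

theorem blockColor_of_lt (hr : r < n + 1) : blockColor n b r = r := by
  unfold blockColor
  split_ifs with h
  · exact Nat.mod_eq_of_lt (by omega)
  · have hb : b = 0 := by
      by_contra hb
      exact h (lt_of_lt_of_le (by omega) (Nat.le_mul_of_pos_left _ (Nat.pos_of_ne_zero hb)))
    simpa [hb] using Nat.mod_eq_of_lt hr

theorem mod_ne_add_mod {m k : ℕ} (hs : 0 < s) (hsm : s < m) : k % m ≠ (k + s) % m := by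
  intro h
  have := Nat.sub_mod_eq_zero_of_mod_eq h.symm
  rw [Nat.add_sub_cancel_left] at this
  exact hs.ne' (Nat.eq_zero_of_dvd_of_lt (Nat.dvd_of_mod_eq_zero this) hsm)

theorem blockColor_ne_add (hs : 0 < s) (hsn : s ≤ n) :
    blockColor n b r ≠ blockColor n b (r + s) := by
  unfold blockColor
  split_ifs with h₁ h₂ h₂
  · exact mod_ne_add_mod hs (by omega)
  · -- `r` lies in the last long block and `r + s` in the first short one
    obtain ⟨b, rfl⟩ : ∃ b', b = b' + 1 := ⟨b - 1, by
      rcases Nat.eq_zero_or_pos b with hb | hb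
      · simp [hb] at h₁
      · omega⟩
    have hmul : (b + 1) * (n + 2) = b * (n + 2) + (n + 2) := by ring
    obtain ⟨t, rfl⟩ : ∃ t, r = b * (n + 2) + t := ⟨r - b * (n + 2), by omega⟩
    rw [Nat.mul_add_mod_of_lt (by omega), Nat.mod_eq_of_lt (by omega)]
    omega
  · omega
  · rw [show r + s - b * (n + 2) = r - b * (n + 2) + s by omega]
    exact mod_ne_add_mod hs (by omega)

theorem blockColor_ne_sub {a L : ℕ} (hL : L = b * (n + 2) + (a + 1) * (n + 1)) (hr : r < L)
    (hrs : L ≤ r + s) (hsn : s ≤ n) : blockColor n b r ≠ r + s - L := by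
  have hmul : (a + 1) * (n + 1) = a * (n + 1) + (n + 1) := by ring
  obtain ⟨t, rfl⟩ : ∃ t, r = b * (n + 2) + a * (n + 1) + t :=
    ⟨r - b * (n + 2) - a * (n + 1), by omega⟩
  unfold blockColor
  rw [if_neg (by omega), show b * (n + 2) + a * (n + 1) + t - b * (n + 2) = a * (n + 1) + t by
    omega, Nat.mul_add_mod_of_lt (by omega)]
  omega

theorem exists_eq_mod_mul_add_mul {L : ℕ} (hL : (n + 1) ^ 2 ≤ L) :
    ∃ a, L = L % (n + 1) * (n + 2) + (a + 1) * (n + 1) := by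
  have hdiv := Nat.div_add_mod L (n + 1)
  have hmod : L % (n + 1) < n + 1 := Nat.mod_lt _ (by omega)
  have hq : n + 1 ≤ L / (n + 1) := (Nat.le_div_iff_mul_le (by omega)).2 (by nlinarith)
  obtain ⟨a, ha⟩ : ∃ a, L / (n + 1) = L % (n + 1) + (a + 1) :=
    ⟨L / (n + 1) - L % (n + 1) - 1, by omega⟩
  refine ⟨a, ?_⟩
  rw [ha] at hdiv
  nlinarith

end BlockColor

noncomputable def gapColor (n : ℕ) (P : Set ℤ) (i : ℤ) : Fin (n + 2) :=
  ⟨blockColor n ((prevDist P i + nextDist P i) % (n + 1)) (prevDist P i), blockColor_lt⟩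

theorem gapColor_preimage_add (n : ℕ) (P : Set ℤ) (s i : ℤ) :
    gapColor n ((· + s) ⁻¹' P) i = gapColor n P (i + s) := by
  simp only [gapColor, prevDist_preimage_add, nextDist_preimage_add]

theorem gapColor_ne_add {n : ℕ} {P : Set ℤ}
    (hsep : ∀ p ∈ P, ∀ q ∈ P, p < q → (n + 1) ^ 2 ≤ q - p) (hbelow : ∀ i, ∃ p ∈ P, p ≤ i)
    (habove : ∀ i, ∃ q ∈ P, i < q) (i : ℤ) {s : ℕ} (hs : 0 < s) (hsn : s ≤ n) :
    gapColor n P i ≠ gapColor n P (i + s) := by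
  have hp := isGreatest_sub_prevDist (hbelow i)
  have hq := isLeast_add_nextDist (habove i)
  have hnext : i < i + nextDist P i := hq.1.2
  have hsq : (n : ℤ) + 1 ≤ (n + 1) ^ 2 := by nlinarith
  obtain ⟨a, ha⟩ := exists_eq_mod_mul_add_mul (n := n) (L := prevDist P i + nextDist P i) (by
    have := hsep _ hp.1.1 _ hq.1.1 (lt_of_le_of_lt hp.1.2 hq.1.2)
    zify
    omega)
  simp only [gapColor, ne_eq, Fin.mk.injEq]
  rcases lt_or_ge (i + s) (i + nextDist P i) with hj | hj
  · have h₁ := prevDist_eq (isGreatest_inter_Iic_of_le_of_lt hp hq (by omega) hj)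
    have h₂ := nextDist_eq (isLeast_inter_Ioi_of_le_of_lt hp hq (by omega) hj)
    rw [show prevDist P (i + s) = prevDist P i + s by omega,
      show prevDist P i + s + nextDist P (i + s) = prevDist P i + nextDist P i by omega]
    exact blockColor_ne_add hs hsn
  · have hqj : IsGreatest (P ∩ Iic (i + s)) (i + nextDist P i) :=
      ⟨⟨hq.1.1, hj⟩, fun m ⟨hm, hmj⟩ => by
        by_contra! hqm
        have := hsep _ hq.1.1 m hm hqm
        have hmj : m ≤ i + s := hmj
        omega⟩
    have h₁ := prevDist_eq hqj
    rw [blockColor_of_lt (r := prevDist P (i + s)) (by omega),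
      show prevDist P (i + s) = prevDist P i + s - (prevDist P i + nextDist P i) by omega]
    exact blockColor_ne_sub ha (by omega) (by omega) hsn

theorem measurable_sInf_nat {α : Type*} [MeasurableSpace α] {p : α → ℕ → Prop}
    (hne : ∀ x, ∃ k, p x k) (hm : ∀ k, MeasurableSet {x | p x k}) :
    Measurable fun x => sInf {k | p x k} := by
  classical
  have : (fun x => sInf {k | p x k}) = fun x => Nat.find (hne x) :=
    funext fun x => Nat.sInf_def (hne x)
  rw [this]
  exact measurable_find hne hm

section MarkerColor

variable (n : ℕ) (M : Set FreePart)

noncomputable def markerColor (x : FreePart) : Fin (n + 2) :=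
  gapColor n {k : ℤ | k +ᵥ x ∈ M} 0

theorem markerColor_vadd (s : ℤ) (x : FreePart) :
    markerColor n M (s +ᵥ x) = gapColor n {k : ℤ | k +ᵥ x ∈ M} s := by
  have : {k : ℤ | k +ᵥ (s +ᵥ x) ∈ M} = (· + s) ⁻¹' {k : ℤ | k +ᵥ x ∈ M} := by
    ext k
    simp only [mem_ofPred_eq, mem_preimage, vadd_vadd]
  rw [markerColor, this, gapColor_preimage_add, zero_add]

variable {M}

theorem measurable_markerColor (hM : MeasurableSet M)
    (hbelow : ∀ x : FreePart, ∃ p ∈ {k : ℤ | k +ᵥ x ∈ M}, p ≤ 0)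
    (habove : ∀ x : FreePart, ∃ q ∈ {k : ℤ | k +ᵥ x ∈ M}, 0 < q) :
    Measurable (markerColor n M) := by
  have hmeas (k : ℤ) : MeasurableSet {x : FreePart | k +ᵥ x ∈ M} :=
    FreePart.measurable_const_vadd k hM
  have hprev : Measurable fun x => prevDist {k : ℤ | k +ᵥ x ∈ M} 0 := by
    refine measurable_sInf_nat (fun x => ?_) fun k => hmeas _
    obtain ⟨p, hpx, hp⟩ := hbelow x
    exact ⟨(-p).toNat, by rwa [Int.toNat_of_nonneg (by omega), zero_sub, neg_neg]⟩
  have hnext : Measurable fun x => nextDist {k : ℤ | k +ᵥ x ∈ M} 0 := by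
    refine measurable_sInf_nat (fun x => ?_) fun k => (MeasurableSet.const _).inter (hmeas _)
    obtain ⟨q, hqx, hq⟩ := habove x
    exact ⟨q.toNat, by omega, by rwa [Int.toNat_of_nonneg (by omega), zero_add]⟩
  exact (measurable_of_countable fun d : ℕ × ℕ =>
    (⟨blockColor n ((d.1 + d.2) % (n + 1)) d.1, blockColor_lt⟩ : Fin (n + 2))).comp
    (hprev.prodMk hnext)

end MarkerColor

theorem exists_isBorelColoring_Icc (n : ℕ) :
    ∃ c : FreePart → Fin (n + 2), IsBorelColoring (Finset.Icc 1 n) c := by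
  set N := n * (n + 2) with hN
  obtain ⟨M, hMm, hMsep, hMcov⟩ := exists_markers N
  have hsep (x : FreePart) : ∀ p ∈ {k : ℤ | k +ᵥ x ∈ M}, ∀ q ∈ {k : ℤ | k +ᵥ x ∈ M}, p < q →
      (n + 1) ^ 2 ≤ q - p := by
    intro p hp q hq hpq
    by_contra! h
    refine hMsep _ hp (q - p) (by omega) ?_ (by rwa [vadd_vadd, sub_add_cancel])
    zify
    rw [abs_of_pos (by omega)]
    push_cast [hN]
    nlinarith
  have hbelow (x : FreePart) (i : ℤ) : ∃ p ∈ {k : ℤ | k +ᵥ x ∈ M}, p ≤ i := by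
    obtain ⟨k, hk, hkx⟩ := hMcov ((i - N) +ᵥ x)
    exact ⟨k + (i - N), by rwa [mem_ofPred_eq, ← vadd_vadd], by omega⟩
  have habove (x : FreePart) (i : ℤ) : ∃ q ∈ {k : ℤ | k +ᵥ x ∈ M}, i < q := by
    obtain ⟨k, hk, hkx⟩ := hMcov ((i + N + 1) +ᵥ x)
    exact ⟨k + (i + N + 1), by rwa [mem_ofPred_eq, ← vadd_vadd], by omega⟩
  refine ⟨markerColor n M, measurable_markerColor n hMm (fun x => hbelow x 0)
    (fun x => habove x 0), fun x a ha _ => ?_⟩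
  rw [Finset.mem_Icc] at ha
  change markerColor n M x ≠ markerColor n M ((a : ℤ) +ᵥ x)
  rw [markerColor_vadd, ← zero_add (a : ℤ)]
  exact gapColor_ne_add (hsep x) (hbelow x) (habove x) 0 (by omega) ha.2

theorem borelChromatic_eq_of {A : Finset ℕ} {k : ℕ}
    (h : ∃ c : FreePart → Fin (k + 1), IsBorelColoring A c)
    (h' : ¬ ∃ c : FreePart → Fin k, IsBorelColoring A c) : borelChromatic A = k + 1 := by
  refine le_antisymm (Nat.sInf_le h) (le_csInf ⟨_, h⟩ fun m ⟨c, hc⟩ => ?_)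
  by_contra! hm
  exact h' ⟨_, hc.castLE (Nat.le_of_lt_succ hm)⟩

/-- For every `n ≥ 1`, `χ(1, 2, …, n) = n + 2`: there is a Borel
proper `(n+2)`-coloring of `G_S` on `F(2^ℤ)` for `S = {±1, …, ±n}`, but no Borel
proper `(n+1)`-coloring. -/
theorem borelChromatic_interval (n : ℕ) (hn : 1 ≤ n) :
    borelChromatic (Finset.Icc 1 n) = n + 2 ∧
    (∃ c : {x : ℤ → Bool // x ∈ FreePart} → Fin (n + 2),
        IsBorelColoring (Finset.Icc 1 n) c) ∧
    ¬ ∃ c : {x : ℤ → Bool // x ∈ FreePart} → Fin (n + 1),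
        IsBorelColoring (Finset.Icc 1 n) c := by
  have upper := exists_isBorelColoring_Icc n
  have lower := not_exists_isBorelColoring_Icc hn
  exact ⟨borelChromatic_eq_of upper lower, upper, lower⟩
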